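/- Let D ⊂ ℝ² be the 'dumbbell' set consisting of two closed disks of area π/2 each (radius 1/√2), whose centers are at distance 2 + 2·(1/√2) = 2 + √2 apart, connected by the straight segment between the nearest points of the two disks (of length 2). Using the Minkowski perimeter (which counts the segment's length twice), the ratio δ(D)/λ₀(D)² equals (√2 − 1)/4 + 1/(2π), where δ(D) = (P(D) − 2π·r)/(2π·r) with r = 1 the radius of the disk of the same area π, and λ₀(D) = |D Δ B_x|/|D| with B_x the disk of area π centered at the barycenter x of D. -/

import Mathlib

/-!
The two disks have total area `π` and the segment is null, so `|D| = π`; `D` is centrally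
symmetric, so its barycenter is the origin. The unit disk meets `D` only in the segment and on
its boundary circle, hence `|D Δ B| = 2π` and `λ₀(D) = 2`. The `ε`-neighbourhood of `D` is two
disks of radius `1/√2 + ε` together with the `ε`-neighbourhood of the segment, which lies between
rectangles of area `4ε(1 - 2ε)` and `4ε(1 + ε)`; so `|D^ε| = π + (2√2π + 4)ε + O(ε²)`, giving
`P(D) = 2√2π + 4` and `δ(D) = √2 - 1 + 2/π`.
-/

open MeasureTheory Metric

/-- A point of the Euclidean plane. -/
noncomputable def pt (a b : ℝ) : EuclideanSpace ℝ (Fin 2) := WithLp.toLp 2 ![a, b]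

/-- The dumbbell: two closed disks of area `π/2` (radius `1/√2`) whose centers are
`2 + √2` apart, joined by the segment of length `2` between their nearest points. -/
noncomputable def dumbbell : Set (EuclideanSpace ℝ (Fin 2)) :=
  closedBall (pt (-(1 + Real.sqrt 2 / 2)) 0) (1 / Real.sqrt 2) ∪
  closedBall (pt (1 + Real.sqrt 2 / 2) 0) (1 / Real.sqrt 2) ∪
  segment ℝ (pt (-1) 0) (pt 1 0)

/-- The barycenter of the dumbbell. -/
noncomputable def dumbbellBary : EuclideanSpace ℝ (Fin 2) :=
  ((volume dumbbell).toReal)⁻¹ • ∫ x in dumbbell, x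

open Filter Topology Module Set
open scoped symmDiff

section General

variable {E : Type*} [NormedAddCommGroup E] [NormedSpace ℝ E]

theorem neg_segment (a b : E) : -segment ℝ a b = segment ℝ (-a) (-b) := by
  rw [← image_neg_eq_neg, segment_eq_image, segment_eq_image, image_image]
  simp only [smul_neg, neg_add]

theorem isCompact_segment (a b : E) : IsCompact (segment ℝ a b) := by
  rw [segment_eq_image_lineMap]
  exact isCompact_Icc.image AffineMap.lineMap_continuous

variable [MeasurableSpace E] [BorelSpace E]

theorem MeasureTheory.Measure.addHaar_segment [FiniteDimensional ℝ E] (μ : Measure E)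
    [μ.IsAddHaarMeasure] (hE : 2 ≤ finrank ℝ E) (a b : E) : μ (segment ℝ a b) = 0 := by
  refine measure_mono_null ((affineSpan ℝ {a, b}).convex.segment_subset
    (left_mem_affineSpan_pair ℝ a b) (right_mem_affineSpan_pair ℝ a b))
    (Measure.addHaar_affineSubspace μ _ fun h => ?_)
  have hline := (collinear_pair ℝ a b).finrank_le_one
  rw [← direction_affineSpan, h, AffineSubspace.direction_top, finrank_top] at hline
  omega

theorem setIntegral_id_eq_zero_of_neg_eq {μ : Measure E} [μ.IsNegInvariant] {s : Set E}
    (hs : MeasurableSet s) (hneg : -s = s) : ∫ x in s, x ∂μ = 0 := by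
  have hodd : ∀ x, s.indicator id (-x) = -s.indicator id x := by
    intro x
    by_cases hx : x ∈ s
    · have : -x ∈ s := by rwa [← Set.neg_mem_neg, neg_neg, hneg]
      simp [hx, this]
    · have : -x ∉ s := by rwa [← Set.neg_mem_neg, neg_neg, hneg]
      simp [hx, this]
  have h : ∫ x, s.indicator id x ∂μ = -∫ x, s.indicator id x ∂μ := by
    rw [← integral_neg, ← integral_neg_eq_self]
    simp_rw [hodd]
  have h2 : (2 : ℝ) • ∫ x, s.indicator id x ∂μ = 0 := by
    rw [two_smul]; nth_rewrite 1 [h]; exact neg_add_cancel _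
  rw [← integral_indicator hs]
  exact (smul_eq_zero.mp h2).resolve_left two_ne_zero

end General

theorem measure_symmDiff_eq_add_of_inter_null {α : Type*} [MeasurableSpace α] {μ : Measure α}
    {s t : Set α} (hs : MeasurableSet s) (ht : MeasurableSet t) (hst : μ (s ∩ t) = 0) :
    μ (s ∆ t) = μ s + μ t := by
  rw [measure_symmDiff_eq hs.nullMeasurableSet ht.nullMeasurableSet, measure_sdiff_null' hst,
    measure_sdiff_null' (by rwa [inter_comm])]

theorem tendsto_sub_div_of_abs_sub_le_sq {f : ℝ → ℝ} {a p C : ℝ}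
    (h : ∀ᶠ ε in 𝓝[>] 0, |f ε - a - p * ε| ≤ C * ε ^ 2) :
    Tendsto (fun ε => (f ε - a) / ε) (𝓝[>] 0) (𝓝 p) := by
  rw [tendsto_iff_norm_sub_tendsto_zero]
  refine squeeze_zero_norm' (a := fun ε => C * ε) ?_ ?_
  · filter_upwards [h, self_mem_nhdsWithin] with ε hε (hpos : 0 < ε)
    rw [norm_norm, Real.norm_eq_abs, div_sub' hpos.ne', abs_div, abs_of_pos hpos,
      div_le_iff₀ hpos, mul_comm ε p]
    linarith [show C * ε ^ 2 = C * ε * ε by ring]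
  · exact tendsto_nhdsWithin_of_tendsto_nhds (by simpa using (continuous_const_mul C).tendsto 0)

@[simp] lemma pt_apply_zero (a b : ℝ) : pt a b 0 = a := rfl

@[simp] lemma pt_apply_one (a b : ℝ) : pt a b 1 = b := rfl

lemma pt_zero_zero : pt 0 0 = 0 := by
  ext i; fin_cases i <;> rfl

lemma neg_pt (a b : ℝ) : -pt a b = pt (-a) (-b) := by
  ext i; fin_cases i <;> rfl

lemma dist_pt (x : EuclideanSpace ℝ (Fin 2)) (a b : ℝ) :
    dist x (pt a b) = √((x 0 - a) ^ 2 + (x 1 - b) ^ 2) := by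
  simp [EuclideanSpace.dist_eq, Fin.sum_univ_two, Real.dist_eq, sq_abs]

lemma dist_pt_pt (a c : ℝ) : dist (pt a 0) (pt c 0) = |a - c| := by
  simp [dist_pt, Real.sqrt_sq_eq_abs]

lemma abs_sub_le_dist_pt (x : EuclideanSpace ℝ (Fin 2)) (a b : ℝ) :
    |x 0 - a| ≤ dist x (pt a b) :=
  PiLp.dist_apply_le x (pt a b) 0

lemma volume_closedBall_fin_two_of_nonneg (x : EuclideanSpace ℝ (Fin 2)) {r : ℝ} (hr : 0 ≤ r) :
    volume (closedBall x r) = ENNReal.ofReal (Real.pi * r ^ 2) := by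
  rw [EuclideanSpace.volume_closedBall_fin_two, ← ENNReal.ofReal_pow hr,
    ← ENNReal.ofReal_mul (by positivity), mul_comm]

lemma volume_coord_prod (s t : Set ℝ) (hs : MeasurableSet s) (ht : MeasurableSet t) :
    volume {x : EuclideanSpace ℝ (Fin 2) | x 0 ∈ s ∧ x 1 ∈ t} = volume s * volume t := by
  have hst : MeasurableSet (univ.pi ![s, t]) :=
    MeasurableSet.univ_pi fun i => by fin_cases i <;> simpa
  have hpre : {x : EuclideanSpace ℝ (Fin 2) | x 0 ∈ s ∧ x 1 ∈ t}
      = (MeasurableEquiv.toLp 2 (Fin 2 → ℝ)).symm ⁻¹' univ.pi ![s, t] := by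
    ext x
    simp [Fin.forall_fin_two]
  rw [hpre, (EuclideanSpace.volume_preserving_symm_measurableEquiv_toLp (Fin 2)).measure_preimage
    hst.nullMeasurableSet, volume_pi_pi, Fin.prod_univ_two]
  simp

def rectangle (a b : ℝ) : Set (EuclideanSpace ℝ (Fin 2)) :=
  {x | x 0 ∈ Icc (-a) a ∧ x 1 ∈ Icc (-b) b}

lemma volume_rectangle {a : ℝ} (ha : 0 ≤ a) (b : ℝ) :
    volume (rectangle a b) = ENNReal.ofReal (4 * a * b) := by
  rw [rectangle, volume_coord_prod _ _ measurableSet_Icc measurableSet_Icc, Real.volume_Icc,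
    Real.volume_Icc, ← ENNReal.ofReal_mul (by linarith)]
  ring_nf

lemma pt_mem_segment {c : ℝ} (hc : |c| ≤ 1) : pt c 0 ∈ segment ℝ (pt (-1) 0) (pt 1 0) := by
  rw [abs_le] at hc
  refine ⟨(1 - c) / 2, (1 + c) / 2, by linarith, by linarith, by ring, ?_⟩
  ext i; fin_cases i <;> simp; ring

lemma abs_le_one_and_eq_zero_of_mem_segment {x : EuclideanSpace ℝ (Fin 2)}
    (hx : x ∈ segment ℝ (pt (-1) 0) (pt 1 0)) : |x 0| ≤ 1 ∧ x 1 = 0 := by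
  obtain ⟨a, b, ha, hb, hab, rfl⟩ := hx
  simp only [PiLp.add_apply, PiLp.smul_apply, pt_apply_zero, pt_apply_one, smul_eq_mul]
  exact ⟨abs_le.mpr ⟨by linarith, by linarith⟩, by ring⟩

lemma volume_segment_pt : volume (segment ℝ (pt (-1) 0) (pt 1 0)) = 0 :=
  Measure.addHaar_segment volume (by simp) _ _

lemma cthickening_segment_subset_rectangle {ε : ℝ} (hε : 0 ≤ ε) :
    cthickening ε (segment ℝ (pt (-1) 0) (pt 1 0)) ⊆ rectangle (1 + ε) ε := by
  rw [cthickening_eq_biUnion_closedBall _ hε, (isCompact_segment _ _).isClosed.closure_eq]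
  simp only [iUnion_subset_iff]
  intro y hy x hx
  obtain ⟨hy0, hy1⟩ := abs_le_one_and_eq_zero_of_mem_segment hy
  rw [mem_closedBall] at hx
  have h0 := abs_le.mp ((PiLp.dist_apply_le x y 0).trans hx)
  have h1 := abs_le.mp ((PiLp.dist_apply_le x y 1).trans hx)
  rw [abs_le] at hy0
  refine ⟨⟨?_, ?_⟩, ?_, ?_⟩ <;> linarith [h0.1, h0.2, h1.1, h1.2]

lemma rectangle_subset_cthickening_segment {a ε : ℝ} (ha : a ≤ 1) :
    rectangle a ε ⊆ cthickening ε (segment ℝ (pt (-1) 0) (pt 1 0)) := by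
  rintro x ⟨⟨hx0, hx0'⟩, hx1, hx1'⟩
  refine mem_cthickening_of_dist_le x (pt (x 0) 0) ε _
    (pt_mem_segment (abs_le.mpr ⟨by linarith, by linarith⟩)) ?_
  rw [dist_pt, sub_self, sub_zero, sq, zero_mul, zero_add, Real.sqrt_sq_eq_abs]
  exact abs_le.mpr ⟨hx1, hx1'⟩

def dumbbellOfRadius (r : ℝ) : Set (EuclideanSpace ℝ (Fin 2)) :=
  closedBall (pt (-(1 + r)) 0) r ∪ closedBall (pt (1 + r) 0) r ∪ segment ℝ (pt (-1) 0) (pt 1 0)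

section DumbbellOfRadius

variable {r ε : ℝ}

lemma dumbbell_eq_dumbbellOfRadius : dumbbell = dumbbellOfRadius (1 / √2) := by
  rw [dumbbell, dumbbellOfRadius, Real.sqrt_div_self']

lemma isClosed_dumbbellOfRadius (r : ℝ) : IsClosed (dumbbellOfRadius r) :=
  (isClosed_closedBall.union isClosed_closedBall).union (isCompact_segment _ _).isClosed

lemma neg_dumbbellOfRadius (r : ℝ) : -dumbbellOfRadius r = dumbbellOfRadius r := by
  simp only [dumbbellOfRadius, union_neg, neg_closedBall, neg_pt, neg_segment, neg_neg, neg_zero]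
  rw [union_comm (closedBall _ _), segment_symm]

lemma setIntegral_dumbbellOfRadius (r : ℝ) : ∫ x in dumbbellOfRadius r, x = 0 :=
  setIntegral_id_eq_zero_of_neg_eq (isClosed_dumbbellOfRadius r).measurableSet
    (neg_dumbbellOfRadius r)

lemma disjoint_closedBall_pt {ρ : ℝ} (hρ₀ : 0 ≤ ρ) (hρ : ρ < 1 + r) :
    Disjoint (closedBall (pt (-(1 + r)) 0) ρ) (closedBall (pt (1 + r) 0) ρ) := by
  apply closedBall_disjoint_closedBall
  rw [dist_pt_pt, abs_of_neg (by linarith)]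
  linarith

lemma volume_dumbbellOfRadius (hr : 0 ≤ r) :
    volume (dumbbellOfRadius r) = ENNReal.ofReal (2 * Real.pi * r ^ 2) := by
  rw [dumbbellOfRadius, measure_congr (union_ae_eq_left_of_ae_eq_empty
      (ae_eq_empty.mpr volume_segment_pt)),
    measure_union (disjoint_closedBall_pt hr (by linarith)) measurableSet_closedBall,
    volume_closedBall_fin_two_of_nonneg _ hr, volume_closedBall_fin_two_of_nonneg _ hr,
    ← ENNReal.ofReal_add (by positivity) (by positivity)]
  ring_nf

lemma dumbbellOfRadius_inter_closedBall_subset (hr : 0 ≤ r) :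
    dumbbellOfRadius r ∩ closedBall 0 1 ⊆ sphere 0 1 ∪ segment ℝ (pt (-1) 0) (pt 1 0) := by
  have hball : ∀ {c : ℝ}, |c| = 1 + r → ∀ x ∈ closedBall (pt c 0) r,
      x ∈ closedBall (0 : EuclideanSpace ℝ (Fin 2)) 1 → x ∈ sphere 0 1 := by
    intro c hc x hx hx1
    rw [mem_closedBall] at hx hx1
    have htri := dist_triangle_left (pt c 0) 0 x
    rw [← pt_zero_zero, dist_pt_pt, sub_zero, hc, pt_zero_zero] at htri
    exact mem_sphere.mpr (le_antisymm hx1 (by linarith))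
  have hc : |1 + r| = 1 + r := abs_of_nonneg (by linarith)
  rintro x ⟨(hx | hx) | hx, hx1⟩
  · exact .inl (hball (by rwa [abs_neg]) x hx hx1)
  · exact .inl (hball hc x hx hx1)
  · exact .inr hx

lemma volume_dumbbellOfRadius_symmDiff_closedBall (hr : 0 ≤ r) :
    volume (dumbbellOfRadius r ∆ closedBall 0 1) =
      ENNReal.ofReal (2 * Real.pi * r ^ 2 + Real.pi) := by
  rw [measure_symmDiff_eq_add_of_inter_null (isClosed_dumbbellOfRadius r).measurableSet
      measurableSet_closedBall (measure_mono_null (dumbbellOfRadius_inter_closedBall_subset hr)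
        (measure_union_null (Measure.addHaar_sphere volume _ _) volume_segment_pt)),
    volume_dumbbellOfRadius hr, volume_closedBall_fin_two_of_nonneg _ zero_le_one,
    ← ENNReal.ofReal_add (by positivity) (by positivity), one_pow, mul_one]

lemma cthickening_dumbbellOfRadius (hr : 0 ≤ r) (hε : 0 ≤ ε) :
    cthickening ε (dumbbellOfRadius r) =
      closedBall (pt (-(1 + r)) 0) (r + ε) ∪ closedBall (pt (1 + r) 0) (r + ε) ∪
        cthickening ε (segment ℝ (pt (-1) 0) (pt 1 0)) := by
  rw [dumbbellOfRadius, cthickening_union, cthickening_union, cthickening_closedBall hε hr,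
    cthickening_closedBall hε hr, add_comm ε]

lemma volume_cthickening_dumbbellOfRadius_le (hr : 0 ≤ r) (hε : 0 ≤ ε) :
    volume (cthickening ε (dumbbellOfRadius r)) ≤
      ENNReal.ofReal (2 * Real.pi * (r + ε) ^ 2 + 4 * (1 + ε) * ε) := by
  rw [cthickening_dumbbellOfRadius hr hε]
  calc _ ≤ volume (closedBall (pt (-(1 + r)) 0) (r + ε)) +
          volume (closedBall (pt (1 + r) 0) (r + ε)) + volume (rectangle (1 + ε) ε) :=
        (measure_union_le _ _).trans (add_le_add (measure_union_le _ _)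
          (measure_mono (cthickening_segment_subset_rectangle hε)))
    _ = _ := by
      rw [volume_closedBall_fin_two_of_nonneg _ (by positivity),
        volume_closedBall_fin_two_of_nonneg _ (by positivity), volume_rectangle (by positivity),
        ← ENNReal.ofReal_add (by positivity) (by positivity),
        ← ENNReal.ofReal_add (by positivity) (by positivity)]
      ring_nf

lemma le_volume_cthickening_dumbbellOfRadius (hr : 0 ≤ r) (hε : 0 < ε) (hε₁ : 2 * ε ≤ 1) :
    ENNReal.ofReal (2 * Real.pi * (r + ε) ^ 2 + 4 * (1 - 2 * ε) * ε) ≤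
      volume (cthickening ε (dumbbellOfRadius r)) := by
  set balls := closedBall (pt (-(1 + r)) 0) (r + ε) ∪ closedBall (pt (1 + r) 0) (r + ε)
  -- the rectangle stops `ε` short of both thickened disks
  have hdisj : Disjoint (rectangle (1 - 2 * ε) ε) balls := by
    rintro s hsR hsB x hx
    obtain ⟨⟨hx0, hx0'⟩, -⟩ := hsR hx
    rcases hsB hx with hxB | hxB <;> rw [mem_closedBall] at hxB <;>
      have := abs_le.mp ((abs_sub_le_dist_pt x _ 0).trans hxB) <;> linarith [this.1, this.2]
  have hsub : rectangle (1 - 2 * ε) ε ∪ balls ⊆ cthickening ε (dumbbellOfRadius r) := by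
    rw [cthickening_dumbbellOfRadius hr hε.le, union_comm]
    exact union_subset_union_right _ (rectangle_subset_cthickening_segment (by linarith))
  refine le_trans (le_of_eq ?_) (measure_mono hsub)
  rw [measure_union hdisj (measurableSet_closedBall.union measurableSet_closedBall),
    measure_union (disjoint_closedBall_pt (by positivity) (by linarith)) measurableSet_closedBall,
    volume_closedBall_fin_two_of_nonneg _ (by positivity),
    volume_closedBall_fin_two_of_nonneg _ (by positivity), volume_rectangle (by linarith),
    ← ENNReal.ofReal_add (by positivity) (by positivity),
    ← ENNReal.ofReal_add (by nlinarith) (by positivity)]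
  ring_nf

lemma tendsto_volume_cthickening_dumbbellOfRadius (hr : 0 ≤ r) :
    Tendsto (fun ε => ((volume (cthickening ε (dumbbellOfRadius r))).toReal
      - 2 * Real.pi * r ^ 2) / ε) (𝓝[>] 0) (𝓝 (4 * Real.pi * r + 4)) := by
  refine tendsto_sub_div_of_abs_sub_le_sq (C := 2 * Real.pi + 8) ?_
  filter_upwards [Ioo_mem_nhdsGT (by norm_num : (0 : ℝ) < 1 / 2)] with ε ⟨hε, hε₁⟩
  have hup := volume_cthickening_dumbbellOfRadius_le hr hε.le
  have hlo := (ENNReal.ofReal_le_iff_le_toReal (ne_top_of_le_ne_top ENNReal.ofReal_ne_top hup)).mp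
    (le_volume_cthickening_dumbbellOfRadius hr hε (by linarith))
  have hup' := ENNReal.toReal_le_of_le_ofReal (by positivity) hup
  rw [abs_le]
  constructor <;> nlinarith [Real.pi_pos, sq_nonneg ε]

end DumbbellOfRadius

/-- The ratio `δ(D)/λ₀(D)²` for the dumbbell, with the Minkowski perimeter,
equals `(√2 - 1)/4 + 1/(2π)`. -/
theorem stmt_9 (P : ℝ)
    (hP : Filter.Tendsto
      (fun ε : ℝ => ((volume (cthickening ε dumbbell)).toReal - (volume dumbbell).toReal) / ε)
      (nhdsWithin 0 (Set.Ioi 0)) (nhds P)) :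
    (P / (2 * Real.pi) - 1) /
      ((volume ((dumbbell \ closedBall dumbbellBary 1) ∪
          (closedBall dumbbellBary 1 \ dumbbell))).toReal / (volume dumbbell).toReal) ^ 2
      = (Real.sqrt 2 - 1) / 4 + 1 / (2 * Real.pi) := by
  have hr : (0 : ℝ) ≤ 1 / √2 := by positivity
  have hr2 : 2 * Real.pi * (1 / √2) ^ 2 = Real.pi := by
    rw [div_pow, Real.sq_sqrt zero_le_two]; ring
  have hvol : (volume dumbbell).toReal = Real.pi := by
    rw [dumbbell_eq_dumbbellOfRadius, volume_dumbbellOfRadius hr, hr2,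
      ENNReal.toReal_ofReal Real.pi_pos.le]
  have hperim : P = 4 * Real.pi * (1 / √2) + 4 := by
    have h := tendsto_volume_cthickening_dumbbellOfRadius hr
    rw [hr2, ← dumbbell_eq_dumbbellOfRadius] at h
    rw [hvol] at hP
    exact tendsto_nhds_unique hP h
  have hbary : dumbbellBary = 0 := by
    rw [dumbbellBary, dumbbell_eq_dumbbellOfRadius, setIntegral_dumbbellOfRadius, smul_zero]
  have hsymm : (volume (dumbbell ∆ closedBall 0 1)).toReal = 2 * Real.pi := by
    rw [dumbbell_eq_dumbbellOfRadius, volume_dumbbellOfRadius_symmDiff_closedBall hr, hr2,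
      ENNReal.toReal_ofReal (by positivity)]
    ring
  rw [hperim, hvol, hbary, ← Set.symmDiff_def, hsymm]
  have hsqrt : √2 ^ 2 = 2 := Real.sq_sqrt zero_le_two
  field_simp
  linear_combination (-8 * Real.pi) * hsqrt
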